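/- Let f : ℂ → ℂ^N be holomorphic and nowhere vanishing, and suppose g := P₊f is also nowhere vanishing. Then g satisfies the Euler–Lagrange (harmonic map) equation of the CP^{N−1} sigma model: (1 − g⊗g†/|g|²) [ ∂∂̄g − ∂g (g†·∂̄g)/|g|² − ∂̄g (g†·∂g)/|g|² ] = 0 at every point of ℂ. (In particular P₊f represents a non-holomorphic harmonic map to CP^{N−1}.) -/

import Mathlib

open Complex Matrix

/-- Wirtinger derivative ∂ = (∂/∂ζ₁ − i ∂/∂ζ₂)/2 of a map ℂ → ℂ. -/
noncomputable def wD (f : ℂ → ℂ) (z : ℂ) : ℂ :=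
  (fderiv ℝ f z 1 - Complex.I * fderiv ℝ f z Complex.I) / 2

/-- Anti-Wirtinger derivative ∂̄ = (∂/∂ζ₁ + i ∂/∂ζ₂)/2 of a map ℂ → ℂ. -/
noncomputable def wDbar (f : ℂ → ℂ) (z : ℂ) : ℂ :=
  (fderiv ℝ f z 1 + Complex.I * fderiv ℝ f z Complex.I) / 2

/-- Componentwise Wirtinger derivative for vector-valued maps. -/
noncomputable def wDV {N : ℕ} (f : ℂ → Fin N → ℂ) (z : ℂ) : Fin N → ℂ :=
  fun i => wD (fun w => f w i) z

/-- Componentwise anti-Wirtinger derivative for vector-valued maps. -/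
noncomputable def wDbarV {N : ℕ} (f : ℂ → Fin N → ℂ) (z : ℂ) : Fin N → ℂ :=
  fun i => wDbar (fun w => f w i) z

/-- Hermitian inner product a†·b = Σᵢ āᵢ bᵢ on ℂ^N. -/
noncomputable def herm {N : ℕ} (a b : Fin N → ℂ) : ℂ :=
  ∑ i, (starRingEnd ℂ) (a i) * b i

/-- Squared norm |a|² as a real number. -/
noncomputable def nsq {N : ℕ} (a : Fin N → ℂ) : ℝ :=
  ∑ i, Complex.normSq (a i)

/-- The operator P₊ g = ∂g − g (g†·∂g)/|g|². -/
noncomputable def Pp {N : ℕ} (g : ℂ → Fin N → ℂ) : ℂ → Fin N → ℂ :=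
  fun z i => wDV g z i - g z i * (herm (g z) (wDV g z) / herm (g z) (g z))

/-- Iterates of P₊ : P₊⁰ g = g, P₊^{k+1} g = P₊ (P₊^k g). -/
noncomputable def PpIter {N : ℕ} (g : ℂ → Fin N → ℂ) : ℕ → (ℂ → Fin N → ℂ)
  | 0 => g
  | k + 1 => Pp (PpIter g k)

/-- The projector P(V) = V ⊗ V† / |V|². -/
noncomputable def proj {N : ℕ} (V : ℂ → Fin N → ℂ) (z : ℂ) : Matrix (Fin N) (Fin N) ℂ :=
  fun i j => V z i * (starRingEnd ℂ) (V z j) / herm (V z) (V z)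

/-- Entrywise Wirtinger derivative for matrix-valued maps. -/
noncomputable def wDM {N : ℕ} (M : ℂ → Matrix (Fin N) (Fin N) ℂ) (z : ℂ) :
    Matrix (Fin N) (Fin N) ℂ :=
  fun i j => wD (fun w => M w i j) z

/-- Entrywise anti-Wirtinger derivative for matrix-valued maps. -/
noncomputable def wDbarM {N : ℕ} (M : ℂ → Matrix (Fin N) (Fin N) ℂ) (z : ℂ) :
    Matrix (Fin N) (Fin N) ℂ :=
  fun i j => wDbar (fun w => M w i j) z



theorem wD_hasFDerivAt {u : ℂ → ℂ} {L : ℂ →L[ℝ] ℂ} {z : ℂ} (h : HasFDerivAt u L z) :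
    wD u z = (L 1 - Complex.I * L Complex.I) / 2 := by rw [wD, h.fderiv]
theorem wDbar_hasFDerivAt {u : ℂ → ℂ} {L : ℂ →L[ℝ] ℂ} {z : ℂ} (h : HasFDerivAt u L z) :
    wDbar u z = (L 1 + Complex.I * L Complex.I) / 2 := by rw [wDbar, h.fderiv]

theorem wD_holo {u : ℂ → ℂ} {z : ℂ} (h : DifferentiableAt ℂ u z) :
    wD u z = deriv u z := by
  have h2 : HasFDerivAt u
      ((ContinuousLinearMap.smulRight (1 : ℂ →L[ℂ] ℂ) (deriv u z)).restrictScalars ℝ) z :=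
    (h.hasDerivAt.hasFDerivAt).restrictScalars ℝ
  rw [wD_hasFDerivAt h2]
  simp only [ContinuousLinearMap.coe_restrictScalars', ContinuousLinearMap.smulRight_apply,
    ContinuousLinearMap.one_apply, smul_eq_mul]
  linear_combination (-(deriv u z)/2) * Complex.I_mul_I

theorem wDbar_holo {u : ℂ → ℂ} {z : ℂ} (h : DifferentiableAt ℂ u z) :
    wDbar u z = 0 := by
  have h2 : HasFDerivAt u
      ((ContinuousLinearMap.smulRight (1 : ℂ →L[ℂ] ℂ) (deriv u z)).restrictScalars ℝ) z :=
    (h.hasDerivAt.hasFDerivAt).restrictScalars ℝ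
  rw [wDbar_hasFDerivAt h2]
  simp only [ContinuousLinearMap.coe_restrictScalars', ContinuousLinearMap.smulRight_apply,
    ContinuousLinearMap.one_apply, smul_eq_mul]
  linear_combination ((deriv u z)/2) * Complex.I_mul_I

variable {u v : ℂ → ℂ} {z : ℂ}

theorem wD_sub (hu : DifferentiableAt ℝ u z) (hv : DifferentiableAt ℝ v z) :
    wD (fun w => u w - v w) z = wD u z - wD v z := by
  simp only [wD, fderiv_fun_sub hu hv, ContinuousLinearMap.sub_apply]; ring
theorem wDbar_sub (hu : DifferentiableAt ℝ u z) (hv : DifferentiableAt ℝ v z) :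
    wDbar (fun w => u w - v w) z = wDbar u z - wDbar v z := by
  simp only [wDbar, fderiv_fun_sub hu hv, ContinuousLinearMap.sub_apply]; ring

theorem wD_neg : wD (fun w => -u w) z = -wD u z := by
  simp only [wD, fderiv_fun_neg, ContinuousLinearMap.neg_apply]; ring

theorem wD_mul (hu : DifferentiableAt ℝ u z) (hv : DifferentiableAt ℝ v z) :
    wD (fun w => u w * v w) z = wD u z * v z + u z * wD v z := by
  simp only [wD, fderiv_fun_mul hu hv, ContinuousLinearMap.add_apply,
    ContinuousLinearMap.smul_apply, smul_eq_mul]; ring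
theorem wDbar_mul (hu : DifferentiableAt ℝ u z) (hv : DifferentiableAt ℝ v z) :
    wDbar (fun w => u w * v w) z = wDbar u z * v z + u z * wDbar v z := by
  simp only [wDbar, fderiv_fun_mul hu hv, ContinuousLinearMap.add_apply,
    ContinuousLinearMap.smul_apply, smul_eq_mul]; ring

theorem wD_sum {ι : Type*} (t : Finset ι) (A : ι → ℂ → ℂ)
    (h : ∀ i ∈ t, DifferentiableAt ℝ (A i) z) :
    wD (fun w => ∑ i ∈ t, A i w) z = ∑ i ∈ t, wD (A i) z := by
  simp only [wD, fderiv_fun_sum h, ContinuousLinearMap.sum_apply]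
  rw [Finset.mul_sum, ← Finset.sum_sub_distrib, Finset.sum_div]
theorem wDbar_sum {ι : Type*} (t : Finset ι) (A : ι → ℂ → ℂ)
    (h : ∀ i ∈ t, DifferentiableAt ℝ (A i) z) :
    wDbar (fun w => ∑ i ∈ t, A i w) z = ∑ i ∈ t, wDbar (A i) z := by
  simp only [wDbar, fderiv_fun_sum h, ContinuousLinearMap.sum_apply]
  rw [Finset.mul_sum, ← Finset.sum_add_distrib, Finset.sum_div]

theorem wD_conj (hu : DifferentiableAt ℝ u z) :
    wD (fun w => (starRingEnd ℂ) (u w)) z = (starRingEnd ℂ) (wDbar u z) := by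
  have h : HasFDerivAt (fun w => (starRingEnd ℂ) (u w))
      ((Complex.conjCLE : ℂ ≃L[ℝ] ℂ).toContinuousLinearMap.comp (fderiv ℝ u z)) z := by
    have := ((Complex.conjCLE : ℂ ≃L[ℝ] ℂ).toContinuousLinearMap.hasFDerivAt).comp z
      hu.hasFDerivAt
    exact this
  rw [wD_hasFDerivAt h]
  simp only [wDbar, ContinuousLinearMap.coe_comp', Function.comp_apply,
    ContinuousLinearEquiv.coe_coe, Complex.conjCLE_apply, map_div₀, map_add, _root_.map_mul,
    Complex.conj_I, map_ofNat]
  ring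
theorem wDbar_conj (hu : DifferentiableAt ℝ u z) :
    wDbar (fun w => (starRingEnd ℂ) (u w)) z = (starRingEnd ℂ) (wD u z) := by
  have h : HasFDerivAt (fun w => (starRingEnd ℂ) (u w))
      ((Complex.conjCLE : ℂ ≃L[ℝ] ℂ).toContinuousLinearMap.comp (fderiv ℝ u z)) z := by
    have := ((Complex.conjCLE : ℂ ≃L[ℝ] ℂ).toContinuousLinearMap.hasFDerivAt).comp z
      hu.hasFDerivAt
    exact this
  rw [wDbar_hasFDerivAt h]
  simp only [wD, ContinuousLinearMap.coe_comp', Function.comp_apply,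
    ContinuousLinearEquiv.coe_coe, Complex.conjCLE_apply, map_div₀, map_sub, _root_.map_mul,
    Complex.conj_I, map_ofNat]
  ring

theorem wD_inv (hv : DifferentiableAt ℝ v z) (hv0 : v z ≠ 0) :
    wD (fun w => (v w)⁻¹) z = -((v z) ^ 2)⁻¹ * wD v z := by
  have hinv : HasFDerivAt (fun x : ℂ => x⁻¹)
      ((ContinuousLinearMap.smulRight (1 : ℂ →L[ℂ] ℂ) (-((v z) ^ 2)⁻¹)).restrictScalars ℝ)
      (v z) := ((hasDerivAt_inv hv0).hasFDerivAt).restrictScalars ℝ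
  have h := hinv.comp z hv.hasFDerivAt
  rw [wD_hasFDerivAt (by exact h)]
  simp only [ContinuousLinearMap.coe_comp', Function.comp_apply,
    ContinuousLinearMap.coe_restrictScalars', ContinuousLinearMap.smulRight_apply,
    ContinuousLinearMap.one_apply, smul_eq_mul, wD]
  ring
theorem wDbar_inv (hv : DifferentiableAt ℝ v z) (hv0 : v z ≠ 0) :
    wDbar (fun w => (v w)⁻¹) z = -((v z) ^ 2)⁻¹ * wDbar v z := by
  have hinv : HasFDerivAt (fun x : ℂ => x⁻¹)
      ((ContinuousLinearMap.smulRight (1 : ℂ →L[ℂ] ℂ) (-((v z) ^ 2)⁻¹)).restrictScalars ℝ)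
      (v z) := ((hasDerivAt_inv hv0).hasFDerivAt).restrictScalars ℝ
  have h := hinv.comp z hv.hasFDerivAt
  rw [wDbar_hasFDerivAt (by exact h)]
  simp only [ContinuousLinearMap.coe_comp', Function.comp_apply,
    ContinuousLinearMap.coe_restrictScalars', ContinuousLinearMap.smulRight_apply,
    ContinuousLinearMap.one_apply, smul_eq_mul, wDbar]
  ring

theorem wD_div (hu : DifferentiableAt ℝ u z) (hv : DifferentiableAt ℝ v z) (hv0 : v z ≠ 0) :
    wD (fun w => u w / v w) z = (wD u z * v z - u z * wD v z) / (v z) ^ 2 := by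
  have h : (fun w => u w / v w) = fun w => u w * (v w)⁻¹ := by
    funext w; rw [div_eq_mul_inv]
  rw [h, wD_mul hu (show DifferentiableAt ℝ (fun w => (v w)⁻¹) z from hv.inv hv0), wD_inv hv hv0]
  field_simp; ring
theorem wDbar_div (hu : DifferentiableAt ℝ u z) (hv : DifferentiableAt ℝ v z) (hv0 : v z ≠ 0) :
    wDbar (fun w => u w / v w) z = (wDbar u z * v z - u z * wDbar v z) / (v z) ^ 2 := by
  have h : (fun w => u w / v w) = fun w => u w * (v w)⁻¹ := by
    funext w; rw [div_eq_mul_inv]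
  rw [h, wDbar_mul hu (show DifferentiableAt ℝ (fun w => (v w)⁻¹) z from hv.inv hv0), wDbar_inv hv hv0]
  field_simp; ring

theorem diff_conj (hu : Differentiable ℝ u) :
    Differentiable ℝ (fun w => (starRingEnd ℂ) (u w)) := by
  have := (Complex.conjCLE : ℂ ≃L[ℝ] ℂ).differentiable.comp hu
  exact this

theorem diff_div (hu : Differentiable ℝ u) (hv : Differentiable ℝ v)
    (hv0 : ∀ w, v w ≠ 0) : Differentiable ℝ (fun w => u w / v w) := by
  have h : (fun w => u w / v w) = fun w => u w * (v w)⁻¹ := by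
    funext w; rw [div_eq_mul_inv]
  rw [h]; exact hu.mul (hv.inv hv0)
variable {N : ℕ}

theorem herm_conj (a b : Fin N → ℂ) : (starRingEnd ℂ) (herm a b) = herm b a := by
  rw [herm, herm, map_sum]
  exact Finset.sum_congr rfl fun i _ => by simp [mul_comm]

theorem herm_ne_zero {a : Fin N → ℂ} (ha : a ≠ 0) : herm a a ≠ 0 := by
  have h1 : herm a a = ((∑ i, Complex.normSq (a i) : ℝ) : ℂ) := by
    rw [herm]; push_cast
    exact Finset.sum_congr rfl fun i _ => by
      rw [Complex.normSq_eq_conj_mul_self]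
  rw [h1]
  intro h
  rw [Complex.ofReal_eq_zero] at h
  apply ha
  funext i
  have := (Finset.sum_eq_zero_iff_of_nonneg
    (fun j _ => Complex.normSq_nonneg (a j))).1 h i (Finset.mem_univ i)
  simpa using Complex.normSq_eq_zero.1 this

theorem herm_sub_right (x y v : Fin N → ℂ) :
    herm x (fun i => y i - v i) = herm x y - herm x v := by
  simp [herm, mul_sub, Finset.sum_sub_distrib]

theorem herm_sub_left (x y v : Fin N → ℂ) :
    herm (fun i => y i - v i) x = herm y x - herm v x := by
  simp [herm, sub_mul, Finset.sum_sub_distrib]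

theorem herm_smul_right (x y : Fin N → ℂ) (k : ℂ) :
    herm x (fun i => y i * k) = herm x y * k := by
  rw [herm, herm, Finset.sum_mul]
  exact Finset.sum_congr rfl fun i _ => by ring

theorem herm_smul_left (x y : Fin N → ℂ) (k : ℂ) :
    herm (fun i => y i * k) x = (starRingEnd ℂ) k * herm y x := by
  rw [herm, herm, Finset.mul_sum]
  exact Finset.sum_congr rfl fun i _ => by simp only [_root_.map_mul]; ring

section Core

variable {N : ℕ} {f : ℂ → Fin N → ℂ}

/-- Componentwise complex derivative. -/
noncomputable def dV (f : ℂ → Fin N → ℂ) : ℂ → Fin N → ℂ := fun z i => deriv (fun w => f w i) z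
noncomputable def wA (f : ℂ → Fin N → ℂ) : ℂ → ℂ := fun w => herm (f w) (dV f w)
noncomputable def wR (f : ℂ → Fin N → ℂ) : ℂ → ℂ := fun w => herm (f w) (f w)
noncomputable def wS (f : ℂ → Fin N → ℂ) : ℂ → ℂ := fun w => herm (Pp f w) (Pp f w)

variable (hf : ∀ i, Differentiable ℂ fun z => f z i) (hf0 : ∀ z, f z ≠ 0)

section
include hf

theorem hf1C : ∀ i, Differentiable ℂ fun w => dV f w i := by
  intro i
  have h : AnalyticOnNhd ℂ (fun w => f w i) Set.univ :=
    analyticOnNhd_univ_iff_differentiable.2 (hf i)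
  exact fun z => ((h.deriv) z (Set.mem_univ z)).differentiableAt

theorem hfR : ∀ i, Differentiable ℝ fun w => f w i := fun i => (hf i).restrictScalars ℝ
theorem hf1R : ∀ i, Differentiable ℝ fun w => dV f w i := fun i => (hf1C hf i).restrictScalars ℝ

theorem diffA : Differentiable ℝ (wA f) := by
  have h : wA f = fun w => ∑ i, (starRingEnd ℂ) (f w i) * dV f w i := rfl
  rw [h]
  exact Differentiable.fun_sum fun i _ => (diff_conj (hfR hf i)).mul (hf1R hf i)

theorem diffR : Differentiable ℝ (wR f) := by
  have h : wR f = fun w => ∑ i, (starRingEnd ℂ) (f w i) * f w i := rfl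
  rw [h]
  exact Differentiable.fun_sum fun i _ => (diff_conj (hfR hf i)).mul (hfR hf i)

theorem hermPp : ∀ w, Pp f w = fun i => dV f w i - f w i * (wA f w / wR f w) := by
  intro w
  have hwDV : wDV f w = dV f w := funext fun j => wD_holo ((hf j) w)
  funext i
  simp only [Pp, hwDV]
  rfl

theorem wD_wR : ∀ z, wD (wR f) z = wA f z := by
  intro z
  have h : wR f = fun w => ∑ i, (starRingEnd ℂ) (f w i) * f w i := rfl
  rw [h, wD_sum Finset.univ (fun i w => (starRingEnd ℂ) (f w i) * f w i)
    (fun i _ => ((diff_conj (hfR hf i)) z).mul ((hfR hf i) z))]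
  show _ = ∑ i, (starRingEnd ℂ) (f z i) * dV f z i
  refine Finset.sum_congr rfl fun i _ => ?_
  rw [wD_mul ((diff_conj (hfR hf i)) z) ((hfR hf i) z),
    wD_conj ((hfR hf i) z), wDbar_holo ((hf i) z), wD_holo ((hf i) z)]
  simp only [map_zero, zero_mul, zero_add]
  rfl

theorem wDbar_wR : ∀ z, wDbar (wR f) z = (starRingEnd ℂ) (wA f z) := by
  intro z
  have h : wR f = fun w => ∑ i, (starRingEnd ℂ) (f w i) * f w i := rfl
  rw [h, wDbar_sum Finset.univ (fun i w => (starRingEnd ℂ) (f w i) * f w i)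
    (fun i _ => ((diff_conj (hfR hf i)) z).mul ((hfR hf i) z))]
  have h2 : ∀ i ∈ Finset.univ, wDbar (fun w => (starRingEnd ℂ) (f w i) * f w i) z
      = (starRingEnd ℂ) (dV f z i) * f z i := by
    intro i _
    rw [wDbar_mul ((diff_conj (hfR hf i)) z) ((hfR hf i) z),
      wDbar_conj ((hfR hf i) z), wD_holo ((hf i) z), wDbar_holo ((hf i) z)]
    simp only [mul_zero, add_zero]
    rfl
  rw [Finset.sum_congr rfl h2]
  rw [show (∑ i, (starRingEnd ℂ) (dV f z i) * f z i) = herm (dV f z) (f z) from rfl,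
    ← herm_conj (f z) (dV f z)]
  rfl

theorem wDbar_wA : ∀ z, wDbar (wA f) z = herm (dV f z) (dV f z) := by
  intro z
  have h : wA f = fun w => ∑ i, (starRingEnd ℂ) (f w i) * dV f w i := rfl
  rw [h, wDbar_sum Finset.univ (fun i w => (starRingEnd ℂ) (f w i) * dV f w i)
    (fun i _ => ((diff_conj (hfR hf i)) z).mul ((hf1R hf i) z))]
  show _ = ∑ i, (starRingEnd ℂ) (dV f z i) * dV f z i
  refine Finset.sum_congr rfl fun i _ => ?_
  rw [wDbar_mul ((diff_conj (hfR hf i)) z) ((hf1R hf i) z),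
    wDbar_conj ((hfR hf i) z), wD_holo ((hf i) z), wDbar_holo ((hf1C hf i) z)]
  simp only [mul_zero, add_zero]
  rfl

end

section
include hf hf0

theorem hr0 : ∀ w, wR f w ≠ 0 := fun w => herm_ne_zero (hf0 w)

theorem diffG : ∀ i, Differentiable ℝ fun w => Pp f w i := by
  intro i
  have h : (fun w => Pp f w i) = fun w => dV f w i - f w i * (wA f w / wR f w) :=
    funext fun w => by rw [hermPp hf w]
  rw [h]
  exact (hf1R hf i).sub ((hfR hf i).mul (diff_div (diffA hf) (diffR hf) (hr0 hf hf0)))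

theorem diffS : Differentiable ℝ (wS f) := by
  have h : wS f = fun w => ∑ i, (starRingEnd ℂ) (Pp f w i) * Pp f w i := rfl
  rw [h]
  exact Differentiable.fun_sum fun i _ => (diff_conj (diffG hf hf0 i)).mul (diffG hf hf0 i)

theorem hfg : ∀ w, herm (f w) (Pp f w) = 0 := by
  intro w
  rw [hermPp hf w, herm_sub_right, herm_smul_right]
  show wA f w - wR f w * (wA f w / wR f w) = 0
  field_simp [hr0 hf hf0 w]
  ring

theorem hgf : ∀ w, herm (Pp f w) (f w) = 0 := by
  intro w
  rw [← herm_conj, hfg hf hf0 w, map_zero]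

theorem s_mul_r : ∀ w, wS f w * wR f w
    = herm (dV f w) (dV f w) * wR f w - wA f w * (starRingEnd ℂ) (wA f w) := by
  intro w
  have hg := hermPp hf (f := f) w
  have hfdg : herm (f w) (fun i => dV f w i - f w i * (wA f w / wR f w)) = 0 := by
    rw [← hg]; exact hfg hf hf0 w
  have h1 : wS f w = herm (dV f w) (dV f w)
      - (starRingEnd ℂ) (wA f w) * (wA f w / wR f w) := by
    show herm (Pp f w) (Pp f w) = _
    conv_lhs => rw [hg]
    rw [herm_sub_left, herm_smul_left, hfdg, mul_zero, sub_zero,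
      herm_sub_right, herm_smul_right, ← herm_conj (f w) (dV f w)]
    rfl
  rw [h1]
  have h0 := hr0 hf hf0 w
  field_simp

theorem hs0' (hPf0 : ∀ z, Pp f z ≠ 0) : ∀ w, wS f w ≠ 0 := fun w => herm_ne_zero (hPf0 w)

theorem wDbar_g : ∀ z i, wDbar (fun w => Pp f w i) z = -(f z i * (wS f z / wR f z)) := by
  intro z i
  have h : (fun w => Pp f w i) = fun w => dV f w i - f w i * (wA f w / wR f w) :=
    funext fun w => by rw [hermPp hf w]
  rw [h, wDbar_sub ((hf1R hf i) z)
      (show DifferentiableAt ℝ (fun w => f w i * (wA f w / wR f w)) z from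
        ((hfR hf i).mul (diff_div (diffA hf) (diffR hf) (hr0 hf hf0))) z),
    wDbar_holo ((hf1C hf i) z),
    wDbar_mul ((hfR hf i) z) ((diff_div (diffA hf) (diffR hf) (hr0 hf hf0)) z),
    wDbar_holo ((hf i) z),
    wDbar_div ((diffA hf) z) ((diffR hf) z) (hr0 hf hf0 z),
    wDbar_wA hf z, wDbar_wR hf z, ← s_mul_r hf hf0 z]
  have h0 := hr0 hf hf0 z
  field_simp
  ring

theorem wD_wS (hPf0 : ∀ z, Pp f z ≠ 0) :
    ∀ z, wD (wS f) z = herm (Pp f z) (wDV (Pp f) z) := by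
  intro z
  have h : wS f = fun w => ∑ i, (starRingEnd ℂ) (Pp f w i) * Pp f w i := rfl
  rw [h, wD_sum Finset.univ (fun i w => (starRingEnd ℂ) (Pp f w i) * Pp f w i)
    (fun i _ => ((diff_conj (diffG hf hf0 i)) z).mul ((diffG hf hf0 i) z))]
  have h2 : ∀ i ∈ Finset.univ, wD (fun w => (starRingEnd ℂ) (Pp f w i) * Pp f w i) z
      = -((starRingEnd ℂ) (wS f z / wR f z) * ((starRingEnd ℂ) (f z i) * Pp f z i))
        + (starRingEnd ℂ) (Pp f z i) * wDV (Pp f) z i := by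
    intro i _
    rw [wD_mul ((diff_conj (diffG hf hf0 i)) z) ((diffG hf hf0 i) z),
      wD_conj ((diffG hf hf0 i) z), wDbar_g hf hf0 z i]
    have : wDV (Pp f) z i = wD (fun w => Pp f w i) z := rfl
    rw [this]
    simp only [map_neg, _root_.map_mul, map_div₀, map_inv₀]
    ring
  rw [Finset.sum_congr rfl h2, Finset.sum_add_distrib]
  rw [Finset.sum_neg_distrib, ← Finset.mul_sum,
    show (∑ i, (starRingEnd ℂ) (f z i) * Pp f z i) = herm (f z) (Pp f z) from rfl,
    hfg hf hf0 z, mul_zero, neg_zero, zero_add]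
  rfl

end

end Core

/-- `g := P₊f` satisfies the Euler–Lagrange (harmonic map) equation
of the `CP^{N−1}` sigma model:
`(1 − g⊗g†/|g|²)[∂∂̄g − ∂g (g†·∂̄g)/|g|² − ∂̄g (g†·∂g)/|g|²] = 0`. -/
theorem stmt_2 {N : ℕ} (f : ℂ → Fin N → ℂ)
    (hf : ∀ i, Differentiable ℂ fun z => f z i)
    (hf0 : ∀ z, f z ≠ 0) (hPf0 : ∀ z, Pp f z ≠ 0) :
    ∀ ζ : ℂ,
      (fun i =>
        (wD (fun w => wDbarV (Pp f) w i) ζ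
          - wDV (Pp f) ζ i * (herm (Pp f ζ) (wDbarV (Pp f) ζ) / herm (Pp f ζ) (Pp f ζ))
          - wDbarV (Pp f) ζ i * (herm (Pp f ζ) (wDV (Pp f) ζ) / herm (Pp f ζ) (Pp f ζ)))
        - Pp f ζ i *
          (herm (Pp f ζ) (fun j =>
            wD (fun w => wDbarV (Pp f) w j) ζ
            - wDV (Pp f) ζ j * (herm (Pp f ζ) (wDbarV (Pp f) ζ) / herm (Pp f ζ) (Pp f ζ))
            - wDbarV (Pp f) ζ j * (herm (Pp f ζ) (wDV (Pp f) ζ) / herm (Pp f ζ) (Pp f ζ)))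
           / herm (Pp f ζ) (Pp f ζ))) = (0 : Fin N → ℂ) := by
  intro ζ
  have hr := hr0 hf hf0
  have hs := hs0' hf hf0 hPf0
  have h2 : wDbarV (Pp f) ζ = fun j => f ζ j * (-(wS f ζ / wR f ζ)) := by
    funext j
    show wDbar (fun w => Pp f w j) ζ = _
    rw [wDbar_g hf hf0 ζ j]; ring
  have hermbar : herm (Pp f ζ) (wDbarV (Pp f) ζ) = 0 := by
    rw [h2, herm_smul_right, hgf hf hf0 ζ, zero_mul]
  have hEc : ∀ j, wD (fun w => wDbarV (Pp f) w j) ζ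
      - wDV (Pp f) ζ j * (herm (Pp f ζ) (wDbarV (Pp f) ζ) / herm (Pp f ζ) (Pp f ζ))
      - wDbarV (Pp f) ζ j * (herm (Pp f ζ) (wDV (Pp f) ζ) / herm (Pp f ζ) (Pp f ζ))
      = Pp f ζ j * (-(wS f ζ / wR f ζ)) := by
    intro j
    have h1 : (fun w => wDbarV (Pp f) w j) = fun w => -(f w j * (wS f w / wR f w)) := by
      funext w
      show wDbar (fun u => Pp f u j) w = _
      exact wDbar_g hf hf0 w j
    rw [h1, wD_neg, wD_mul ((hfR hf j) ζ) ((diff_div (diffS hf hf0) (diffR hf) hr) ζ),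
      wD_holo ((hf j) ζ),
      wD_div ((diffS hf hf0) ζ) ((diffR hf) ζ) (hr ζ),
      wD_wS hf hf0 hPf0 ζ, wD_wR hf ζ, hermbar]
    rw [show herm (Pp f ζ) (Pp f ζ) = wS f ζ from rfl]
    simp only [h2, zero_div, mul_zero, sub_zero]
    generalize herm (Pp f ζ) (wDV (Pp f) ζ) = X
    simp only [hermPp hf ζ, dV]
    field_simp [hr ζ, hs ζ]
    ring
  funext i
  simp only [Pi.zero_apply]
  simp only [hEc]
  rw [herm_smul_right (Pp f ζ) (Pp f ζ) (-(wS f ζ / wR f ζ))]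
  rw [show herm (Pp f ζ) (Pp f ζ) = wS f ζ from rfl]
  rw [mul_comm (wS f ζ), mul_div_assoc, div_self (hs ζ), mul_one, sub_self]
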